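/- arXiv:2405.04631 — 2 statements merged into one kernel-verified Lean document; each statement's English description precedes it below -/
import Mathlib

section
/- For every semistandard pair (i,j) ∈ I(d,N) × {0,1,…,d}, the element F_Δ(i,j) lies in the kernel of μ_N : ⋀^N Sym^d E ⊗ Sym^d E → ⋀^{N+1} Sym^d E; that is, μ_N(F_Δ(i,j)) = 0. -/
/-!
The wedge `μ_N(F(i,j))` is the exterior product of the `N + 1` monomials indexed by `i₁, …, i_N, j`.
If `j` occurs among the `iₐ`, two factors coincide and the product vanishes. Otherwise the
neighbour `P(i,j)` exchanges `j` with `i_α`, so `μ_N(F(P(i,j)))` is the same product with two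
factors transposed, i.e. `-μ_N(F(i,j))`; semistandardness (`i₁ ≤ j`) guarantees that `α` exists.
-/


open MvPolynomial TensorProduct

set_option maxHeartbeats 1000000
set_option synthInstance.maxHeartbeats 400000

noncomputable section

/-- `Sym' F c` : the `c`-th symmetric power of `E = F²`, realised as the space of
homogeneous polynomials of degree `c` in the two variables `X = X 0`, `Y = X 1`. -/
abbrev Sym' (F : Type*) [Field F] (c : ℕ) : Type _ :=
  ↥(MvPolynomial.homogeneousSubmodule (Fin 2) F c)

variable (F : Type*) [Field F]

/-- The basis monomial `X^(c-i) Y^i` of `Sym' F c`; it is `0` (junk) if `i > c`. -/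
def XY (c i : ℕ) : Sym' F c :=
  if h : i ≤ c then
    ⟨(X 0 : MvPolynomial (Fin 2) F) ^ (c - i) * X 1 ^ i, by
      rw [MvPolynomial.mem_homogeneousSubmodule]
      have := ((isHomogeneous_X_pow (R := F) (0 : Fin 2) (c - i)).mul
        (isHomogeneous_X_pow (R := F) (1 : Fin 2) i))
      rwa [Nat.sub_add_cancel h] at this⟩
  else 0

/-- `F_∧^{(c)}(k) = X^{c-k₁}Y^{k₁} ∧ ⋯ ∧ X^{c-k_r}Y^{k_r}` in `⋀^r (Sym' F c)`. -/
def wedge (c : ℕ) {r : ℕ} (k : Fin r → ℕ) : ⋀[F]^r (Sym' F c) :=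
  ⟨ExteriorAlgebra.ιMulti F r fun a => XY F c (k a),
    ExteriorAlgebra.ιMulti_range F r (Set.mem_range_self _)⟩

/-- `F(i,j) = F_∧^{(d)}(i) ⊗ X^{d-j}Y^j`. -/
def Fp (d : ℕ) {N : ℕ} (i : Fin N → ℕ) (j : ℕ) :
    (⋀[F]^N (Sym' F d)) ⊗[F] (Sym' F d) :=
  wedge F d i ⊗ₜ[F] XY F d j

/-- The multiplication map `μ_N : ⋀^N V ⊗ V → ⋀^{N+1} V` for `V = Sym' F c`. -/
def mu (c N : ℕ) :
    ((⋀[F]^N (Sym' F c)) ⊗[F] (Sym' F c)) →ₗ[F] ⋀[F]^(N + 1) (Sym' F c) :=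
  TensorProduct.lift
    (LinearMap.mk₂ F
      (fun w v => ⟨(w : ExteriorAlgebra F (Sym' F c)) * ExteriorAlgebra.ι F v, by
        have h := Submodule.mul_mem_mul w.2
          (LinearMap.mem_range_self (ExteriorAlgebra.ι F (M := Sym' F c)) v)
        rwa [← pow_succ] at h⟩)
      (fun w w' v => by ext; simp [add_mul])
      (fun a w v => by ext; simp [mul_assoc, Algebra.smul_mul_assoc])
      (fun w v v' => by ext; simp [mul_add])
      (fun a w v => by ext; simp [Algebra.mul_smul_comm]))

/-- The box `B(k) = [k₁,k₂) × ⋯ × [k_N, k_{N+1})` as a finset of multi-indices. -/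
def box {N : ℕ} (k : Fin (N + 1) → ℕ) : Finset (Fin N → ℕ) :=
  Fintype.piFinset fun a : Fin N => Finset.Ico (k a.castSucc) (k a.succ)

/-- `v_{(s,k)} = Σ_{i ∈ B(k)} F(i, s + |k| - N - |i|)`. -/
def vv (d N : ℕ) (s : ℕ) (k : Fin (N + 1) → ℕ) :
    (⋀[F]^N (Sym' F d)) ⊗[F] (Sym' F d) :=
  ∑ i ∈ box k, Fp F d i (s + (∑ a, k a) - N - ∑ a, i a)

/-- A pair `(i, j)` is semistandard (with entries in `{0,…,d}`). -/
def IsSS (d : ℕ) {N : ℕ} (p : (Fin N → ℕ) × ℕ) : Prop :=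
  StrictMono p.1 ∧ (∀ a, p.1 a ≤ d) ∧ p.2 ≤ d ∧
    ∀ a : Fin N, (a : ℕ) = 0 → p.1 a ≤ p.2

/-- The neighbour map `P`. -/
def Pmap {N : ℕ} (p : (Fin N → ℕ) × ℕ) : (Fin N → ℕ) × ℕ :=
  if h : (Finset.univ.filter fun a : Fin N => p.1 a ≤ p.2).Nonempty then
    let α := (Finset.univ.filter fun a : Fin N => p.1 a ≤ p.2).max' h
    (Function.update p.1 α p.2, p.1 α)
  else p

/-- `F_Δ(i,j)`. -/
def FDelta (d : ℕ) {N : ℕ} (p : (Fin N → ℕ) × ℕ) :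
    (⋀[F]^N (Sym' F d)) ⊗[F] (Sym' F d) :=
  if ∃ a, p.1 a = p.2 then Fp F d p.1 p.2
  else Fp F d p.1 p.2 + Fp F d (Pmap p).1 (Pmap p).2

/-- The content multiset of a pair. -/
def ssContent {N : ℕ} (p : (Fin N → ℕ) × ℕ) : Multiset ℕ :=
  p.2 ::ₘ Finset.univ.val.map p.1

open Function

lemma ExteriorAlgebra.ιMulti_mul_ι {R M : Type*} [CommRing R] [AddCommGroup M] [Module R M]
    (n : ℕ) (f : Fin n → M) (v : M) :
    ιMulti R n f * ι R v = ιMulti R (n + 1) (Fin.snoc f v) := by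
  rw [ιMulti_apply, ιMulti_apply, List.ofFn_succ', List.concat_eq_append, List.prod_append,
    List.prod_singleton]
  simp

lemma Fin.snoc_update_eq_comp_swap {M : Type*} {n : ℕ} (f : Fin n → M) (v : M) (α : Fin n) :
    (snoc (update f α v) (f α) : Fin (n + 1) → M) =
      snoc f v ∘ Equiv.swap α.castSucc (last n) := by
  rw [Equiv.comp_swap_eq_update, snoc_update, snoc_castSucc, snoc_last, update_snoc_last]

lemma coe_mu_Fp (c N : ℕ) (i : Fin N → ℕ) (j : ℕ) :
    (mu F c N (Fp F c i j) : ExteriorAlgebra F (Sym' F c)) =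
      ExteriorAlgebra.ιMulti F (N + 1) (Fin.snoc (XY F c ∘ i) (XY F c j)) :=
  ExteriorAlgebra.ιMulti_mul_ι N _ _

lemma mu_Fp_eq_zero_of_eq {c N : ℕ} {i : Fin N → ℕ} {j : ℕ} (a : Fin N) (h : i a = j) :
    mu F c N (Fp F c i j) = 0 := by
  ext1
  rw [coe_mu_Fp]
  exact AlternatingMap.map_eq_zero_of_eq _ _ (i := a.castSucc) (j := Fin.last N)
    (by simp [h]) (Fin.castSucc_lt_last a).ne

lemma mu_Fp_update_swap (c : ℕ) {N : ℕ} (i : Fin N → ℕ) (j : ℕ) (α : Fin N) :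
    mu F c N (Fp F c (update i α j) (i α)) = -mu F c N (Fp F c i j) := by
  ext1
  rw [Submodule.coe_neg, coe_mu_Fp, coe_mu_Fp, comp_update]
  exact (congrArg _ (Fin.snoc_update_eq_comp_swap (XY F c ∘ i) (XY F c j) α)).trans
    (AlternatingMap.map_swap _ _ (Fin.castSucc_lt_last α).ne)

lemma Pmap_eq_update {N : ℕ} (p : (Fin N → ℕ) × ℕ) (h : ∃ a, p.1 a ≤ p.2) :
    ∃ α, Pmap p = (update p.1 α p.2, p.1 α) := by
  obtain ⟨a, ha⟩ := h
  exact ⟨_, dif_pos ⟨a, Finset.mem_filter.2 ⟨Finset.mem_univ a, ha⟩⟩⟩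

/-- Each `F_Δ(i,j)` for a semistandard pair `(i,j)` lies in the kernel of the
multiplication map `μ_N : ⋀^N Sym^d E ⊗ Sym^d E → ⋀^{N+1} Sym^d E`. -/
theorem statement7 (F : Type*) [Field F] (N d : ℕ) (hN : 0 < N)
    (p : (Fin N → ℕ) × ℕ) (hp : IsSS d p) :
    mu F d N (FDelta F d p) = 0 := by
  obtain ⟨-, -, -, hi₁_le_j⟩ := hp
  rw [FDelta]
  split_ifs with hmem
  · obtain ⟨a, ha⟩ := hmem
    exact mu_Fp_eq_zero_of_eq F a ha
  · obtain ⟨α, hα⟩ := Pmap_eq_update p ⟨⟨0, hN⟩, hi₁_le_j _ rfl⟩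
    rw [hα, map_add, mu_Fp_update_swap, add_neg_cancel]

end
end

section
/- Over the field ℂ, the map φ commutes with the Lie algebra action of e ∈ sl_2(ℂ): φ(e·x) = e·φ(x) for every x ∈ Sym^{N−1}E ⊗ ⋀^{N+1}Sym^{d+1}E. -/
open MvPolynomial TensorProduct

set_option maxHeartbeats 1000000
set_option synthInstance.maxHeartbeats 400000

noncomputable section

variable (F : Type*) [Field F]

abbrev Dom (N d : ℕ) : Type _ := (Sym' F (N - 1)) ⊗[F] ↥(⋀[F]^(N + 1) (Sym' F (d + 1)))

/-- The codomain `⋀^N Sym^d E ⊗ Sym^d E` of `φ`. -/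
abbrev Cod (N d : ℕ) : Type _ := ↥(⋀[F]^N (Sym' F d)) ⊗[F] (Sym' F d)

/-!
Both sides are linear, so it suffices to compare them on `X^{N-1-s}Y^s ⊗ F_∧(k)` with `k`
strictly increasing. Lowering one entry of such a `k` gives a monotone multi-index, on which `φ`
is still given by the box formula, because a repeated entry kills both the wedge and the box.
Both sides then become combinations of the vectors `F(m, j - 1)`, `j = s + |k| - N - |m|`, in
which only injective `m` matter, and their coefficients agree by a counting identity for boxes.
For `m ∈ B(k)`, lowering `k_{β+1}` keeps `m` in a box exactly when raising `m_β` does, and the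
coefficients telescope to `j`. For `m ∉ B(k)`, lowering the left end `k_β` of the `β`-th interval
brings `m` into the box exactly when raising `m_β` does, and then `k_β = m_β + 1`.
-/

open Function

lemma monomial_one_eq_XY {c : ℕ} {e : Fin 2 →₀ ℕ} (he : e.degree = c) :
    (monomial e (1 : F)) = (XY F c (e 1) : MvPolynomial (Fin 2) F) := by
  rw [Finsupp.degree_eq_sum, Fin.sum_univ_two] at he
  rw [XY, dif_pos (by omega), monomial_eq, C_1, one_mul, Finsupp.prod_fintype _ _ (by simp),
    Fin.prod_univ_two]
  congr 2
  omega

lemma span_XY (c : ℕ) : Submodule.span F (Set.range fun i : Fin (c + 1) => XY F c i) = ⊤ := by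
  apply Submodule.map_injective_of_injective (homogeneousSubmodule (Fin 2) F c).injective_subtype
  rw [Submodule.map_span, Submodule.map_top, Submodule.range_subtype]
  refine le_antisymm (Submodule.span_le.mpr ?_) ?_
  · rintro _ ⟨_, ⟨i, rfl⟩, rfl⟩
    exact (XY F c i).2
  conv_lhs => rw [homogeneousSubmodule_eq_finsupp_supported,
    AddMonoidAlgebra.supported_eq_span_single]
  rw [Submodule.span_le]
  rintro _ ⟨e, he, rfl⟩
  refine Submodule.subset_span ⟨XY F c (e 1), ⟨⟨e 1, ?_⟩, rfl⟩, ?_⟩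
  · rw [Set.mem_ofPred_eq, Finsupp.degree_eq_sum, Fin.sum_univ_two] at he
    omega
  · exact (monomial_one_eq_XY F he).symm

lemma span_wedge_strictMono (c r : ℕ) :
    Submodule.span F {w | ∃ k : Fin r → ℕ, StrictMono k ∧ (∀ a, k a ≤ c) ∧ wedge F c k = w} =
      ⊤ := by
  rw [eq_top_iff, ← exteriorPower.ιMulti_family_span_of_span F (n := r) (span_XY F c)]
  refine Submodule.span_mono ?_
  rintro _ ⟨S, rfl⟩
  set e := Set.powersetCard.ofFinEmbEquiv.symm S
  exact ⟨fun a => e a, fun a b hab => e.strictMono hab, fun a => Nat.lt_succ_iff.mp (e a).2, rfl⟩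

theorem TensorProduct.ext_of_span_eq_top {R M N P : Type*} [CommSemiring R] [AddCommMonoid M]
    [AddCommMonoid N] [AddCommMonoid P] [Module R M] [Module R N] [Module R P] {s : Set M}
    {t : Set N} (hs : Submodule.span R s = ⊤) (ht : Submodule.span R t = ⊤)
    {f g : M ⊗[R] N →ₗ[R] P} (h : ∀ x ∈ s, ∀ y ∈ t, f (x ⊗ₜ y) = g (x ⊗ₜ y)) : f = g :=
  TensorProduct.ext <| LinearMap.ext_on hs fun x hx => LinearMap.ext_on ht fun y hy => h x hx y hy

lemma wedge_eq_zero_of_not_injective {c r : ℕ} {k : Fin r → ℕ} (hk : ¬Injective k) :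
    wedge F c k = 0 :=
  (exteriorPower.ιMulti F r).map_eq_zero_of_not_injective _ fun h => hk (h.of_comp (f := XY F c))

lemma update_sub_one_le {ι : Type*} [DecidableEq ι] (k : ι → ℕ) (α : ι) :
    update k α (k α - 1) ≤ k :=
  update_le_self_iff.mpr (Nat.sub_le _ _)

lemma monotone_update_sub_one {ι : Type*} [PartialOrder ι] [DecidableEq ι] {k : ι → ℕ}
    (hk : StrictMono k) (α : ι) : Monotone (update k α (k α - 1)) := by
  intro a b hab
  rcases eq_or_ne a α with rfl | ha
  · rcases eq_or_ne b a with rfl | hb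
    · exact le_rfl
    · have := hk (lt_of_le_of_ne hab hb.symm)
      rw [update_self, update_of_ne hb]
      omega
  · rcases eq_or_ne b α with rfl | hb
    · have := hk (lt_of_le_of_ne hab ha)
      rw [update_self, update_of_ne ha]
      omega
    · rw [update_of_ne ha, update_of_ne hb]
      exact hk.monotone hab

lemma sum_update_add {ι : Type*} [Fintype ι] [DecidableEq ι] (f : ι → ℕ) (a : ι) (b : ℕ) :
    ∑ x, update f a b x + f a = ∑ x, f x + b := by
  rw [Finset.sum_update_of_mem (Finset.mem_univ a),
    Finset.sum_eq_add_sum_sdiff_singleton_of_mem (Finset.mem_univ a)]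
  ring

lemma update_sub_one_add_one {ι : Type*} [DecidableEq ι] {i : ι → ℕ} {β : ι} (hβ : i β ≠ 0) :
    update (update i β (i β - 1)) β (update i β (i β - 1) β + 1) = i := by
  rw [update_idem, update_self, Nat.sub_add_cancel (Nat.one_le_iff_ne_zero.mpr hβ),
    update_eq_self]

def vvIndex (N s : ℕ) (k : Fin (N + 1) → ℕ) (i : Fin N → ℕ) : ℕ := s + ∑ a, k a - N - ∑ a, i a

lemma vv_eq (d N s : ℕ) (k : Fin (N + 1) → ℕ) :
    vv F d N s k = ∑ i ∈ box k, Fp F d i (vvIndex N s k i) := rfl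

section BoxCombinatorics

variable {N : ℕ} {k : Fin (N + 1) → ℕ} {m : Fin N → ℕ}

lemma mem_box : m ∈ box k ↔ ∀ a : Fin N, k a.castSucc ≤ m a ∧ m a < k a.succ := by
  simp [box, Fintype.mem_piFinset]

lemma strictMono_of_mem_box (hm : m ∈ box k) :
    StrictMono k :=
  Fin.strictMono_iff_lt_succ.mpr fun a => ((mem_box.mp hm a).1).trans_lt (mem_box.mp hm a).2

lemma box_subset_box {k' : Fin (N + 1) → ℕ} (hlo : ∀ a : Fin N, k a.castSucc ≤ k' a.castSucc)
    (hhi : ∀ a : Fin N, k' a.succ ≤ k a.succ) : box k' ⊆ box k := fun _ hm =>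
  mem_box.mpr fun a => ⟨(hlo a).trans (mem_box.mp hm a).1, (mem_box.mp hm a).2.trans_le (hhi a)⟩

lemma mem_box_update_zero (hm : m ∈ box k) :
    m ∈ box (update k 0 (k 0 - 1)) :=
  box_subset_box (fun a => update_sub_one_le k 0 _)
    (fun a => by rw [update_of_ne (Fin.succ_ne_zero a)]) hm

lemma mem_box_of_mem_box_update_last
    (hm : m ∈ box (update k (Fin.last N) (k (Fin.last N) - 1))) : m ∈ box k :=
  box_subset_box (fun a => by rw [update_of_ne (Fin.castSucc_ne_last a)])
    (fun a => update_sub_one_le k _ _) hm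

lemma mem_box_update_succ_iff (hm : m ∈ box k) (β : Fin N) :
    m ∈ box (update k β.succ (k β.succ - 1)) ↔ m β + 1 < k β.succ := by
  refine ⟨fun h => ?_, fun h => mem_box.mpr fun a => ⟨?_, ?_⟩⟩
  · have := (mem_box.mp h β).2
    rw [update_self] at this
    omega
  · exact (update_sub_one_le k _ _).trans (mem_box.mp hm a).1
  · rcases eq_or_ne a β with rfl | ha
    · rw [update_self]; omega
    · rw [update_of_ne ((Fin.succ_injective _).ne ha)]; exact (mem_box.mp hm a).2

lemma update_mem_box_iff (hm : m ∈ box k) (β : Fin N) :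
    update m β (m β + 1) ∈ box k ↔ m β + 1 < k β.succ := by
  refine ⟨fun h => ?_, fun h => mem_box.mpr fun a => ?_⟩
  · simpa using (mem_box.mp h β).2
  · rcases eq_or_ne a β with rfl | ha
    · rw [update_self]; exact ⟨(mem_box.mp hm a).1.trans (Nat.le_succ _), h⟩
    · rw [update_of_ne ha]; exact mem_box.mp hm a

lemma add_one_eq_of_not_mem_box (hB : m ∉ box k) {β : Fin N}
    (hout : ∀ a ≠ β, k a.castSucc ≤ m a ∧ m a < k a.succ) (hle : k β.castSucc ≤ m β + 1)
    (hlt : m β < k β.succ) : m β + 1 = k β.castSucc := by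
  by_contra hne
  refine hB (mem_box.mpr fun a => ?_)
  rcases eq_or_ne a β with rfl | ha
  · exact ⟨by omega, hlt⟩
  · exact hout a ha

lemma mem_box_update_castSucc_iff (hk : StrictMono k) (hm : Injective m) (hB : m ∉ box k)
    (β : Fin N) :
    m ∈ box (update k β.castSucc (k β.castSucc - 1)) ↔ update m β (m β + 1) ∈ box k := by
  have hβ : β.succ ≠ β.castSucc := (Fin.castSucc_lt_succ).ne'
  constructor
  · intro h
    have hout : ∀ a ≠ β, k a.castSucc ≤ m a ∧ m a < k a.succ := fun a ha => by
      have := mem_box.mp h a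
      rw [update_of_ne ((Fin.castSucc_injective _).ne ha)] at this
      exact ⟨this.1, this.2.trans_le (update_sub_one_le k _ _)⟩
    have hmβ := mem_box.mp h β
    rw [update_self, update_of_ne hβ] at hmβ
    have heq := add_one_eq_of_not_mem_box hB hout (by omega) hmβ.2
    refine mem_box.mpr fun a => ?_
    rcases eq_or_ne a β with rfl | ha
    · rw [update_self, heq]; exact ⟨le_rfl, hk Fin.castSucc_lt_succ⟩
    · rw [update_of_ne ha]; exact hout a ha
  · intro h
    have hout : ∀ a ≠ β, k a.castSucc ≤ m a ∧ m a < k a.succ := fun a ha => by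
      simpa [update_of_ne ha] using mem_box.mp h a
    have hmβ := mem_box.mp h β
    rw [update_self] at hmβ
    have heq := add_one_eq_of_not_mem_box hB hout hmβ.1 (by omega)
    refine mem_box.mpr fun a => ?_
    rcases eq_or_ne a β with rfl | ha
    · rw [update_self, update_of_ne hβ]; omega
    rw [update_of_ne ((Fin.castSucc_injective _).ne ha)]
    refine ⟨(hout a ha).1, ?_⟩
    rcases eq_or_ne a.succ β.castSucc with hs | hs
    · have hne : m a ≠ m β := hm.ne ha
      have := (hout a ha).2
      rw [hs] at this ⊢
      rw [update_self]
      omega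
    · rw [update_of_ne hs]; exact (hout a ha).2

lemma castSucc_eq_of_update_mem_box (hB : m ∉ box k) {β : Fin N}
    (h : update m β (m β + 1) ∈ box k) : k β.castSucc = m β + 1 := by
  have hmβ := mem_box.mp h β
  rw [update_self] at hmβ
  refine (add_one_eq_of_not_mem_box hB (fun a ha => ?_) hmβ.1 (by omega)).symm
  simpa [update_of_ne ha] using mem_box.mp h a

lemma box_entry_le {d : ℕ} {i : Fin N → ℕ} (hkd : ∀ a, k a ≤ d + 1)
    (hi : i ∈ box k) (a : Fin N) : i a ≤ d :=
  Nat.le_of_lt_succ ((mem_box.mp hi a).2.trans_le (hkd _))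

lemma vvIndex_le {d s : ℕ} {i : Fin N → ℕ} (hs : s < N)
    (hkd : ∀ a, k a ≤ d + 1) (hi : i ∈ box k) : vvIndex N s k i ≤ d := by
  have hlo : ∑ a : Fin N, k a.castSucc ≤ ∑ a, i a :=
    Finset.sum_le_sum fun a _ => (mem_box.mp hi a).1
  have := hkd (Fin.last N)
  rw [vvIndex, Fin.sum_univ_castSucc]
  omega

lemma box_coeff_identity (hk : StrictMono k) (hm : Injective m) (s : ℕ) :
    (if m ∈ box k then s else 0) + ∑ α, (if m ∈ box (update k α (k α - 1)) then k α else 0) =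
      ∑ β, (if update m β (m β + 1) ∈ box k then m β + 1 else 0) +
        (if m ∈ box k then vvIndex N s k m else 0) := by
  by_cases hB : m ∈ box k
  · simp only [if_pos hB]
    rw [Fin.sum_univ_succ, if_pos (mem_box_update_zero hB)]
    simp only [mem_box_update_succ_iff hB, update_mem_box_iff hB]
    have hterm : ∀ β : Fin N, (if m β + 1 < k β.succ then k β.succ else 0) + (m β + 1) =
        (if m β + 1 < k β.succ then m β + 1 else 0) + k β.succ := fun β => by
      have := (mem_box.mp hB β).2
      split_ifs <;> omega
    have hsum := Finset.sum_congr rfl fun β (_ : β ∈ Finset.univ) => hterm β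
    have hle : ∑ β, (m β + 1) ≤ ∑ β : Fin N, k β.succ :=
      Finset.sum_le_sum fun β _ => (mem_box.mp hB β).2
    simp only [Finset.sum_add_distrib, Finset.sum_const, Finset.card_univ, Fintype.card_fin,
      smul_eq_mul, mul_one] at hsum hle
    rw [vvIndex, Fin.sum_univ_succ k]
    omega
  · simp only [if_neg hB, zero_add, add_zero]
    rw [Fin.sum_univ_castSucc, if_neg fun h => hB (mem_box_of_mem_box_update_last h), add_zero]
    refine Finset.sum_congr rfl fun β _ => ?_
    simp only [mem_box_update_castSucc_iff hk hm hB]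
    split_ifs with h
    · exact castSucc_eq_of_update_mem_box hB h
    · rfl

end BoxCombinatorics

section Expansion

variable {N d s : ℕ} {k : Fin (N + 1) → ℕ}

lemma vvIndex_pred_left (hs : s ≠ 0) (i : Fin N → ℕ) :
    vvIndex N (s - 1) k i = vvIndex N s k i - 1 := by
  unfold vvIndex; omega

lemma vvIndex_update_sub_one {α : Fin (N + 1)} (hα : k α ≠ 0) (i : Fin N → ℕ) :
    vvIndex N s (update k α (k α - 1)) i = vvIndex N s k i - 1 := by
  have := sum_update_add k α (k α - 1)
  unfold vvIndex; omega

lemma vvIndex_update_add_one (i : Fin N → ℕ) (β : Fin N) :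
    vvIndex N s k (update i β (i β + 1)) = vvIndex N s k i - 1 := by
  have := sum_update_add i β (i β + 1)
  unfold vvIndex; omega

/-- Every box with entries at most `d + 1` lies in `cube N d`, so sums over different boxes can be
compared termwise there. -/
def cube (N d : ℕ) : Finset (Fin N → ℕ) := Fintype.piFinset fun _ => Finset.range (d + 1)

lemma box_subset_cube (hkd : ∀ a, k a ≤ d + 1) : box k ⊆ cube N d := fun _ hm =>
  Fintype.mem_piFinset.mpr fun a => Finset.mem_range.mpr ((mem_box.mp hm a).2.trans_le (hkd _))

lemma mem_cube_of_le {m i : Fin N → ℕ} (h : m ≤ i) (hi : i ∈ cube N d) : m ∈ cube N d :=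
  Fintype.mem_piFinset.mpr fun a =>
    Finset.mem_range.mpr ((h a).trans_lt (Finset.mem_range.mp (Fintype.mem_piFinset.mp hi a)))

lemma sum_box_eq_sum_cube {M : Type*} [AddCommMonoid M] (hkd : ∀ a, k a ≤ d + 1)
    (f : (Fin N → ℕ) → M) :
    ∑ i ∈ box k, f i = ∑ m ∈ cube N d, if m ∈ box k then f m else 0 := by
  rw [Finset.sum_ite_mem, Finset.inter_eq_right.mpr (box_subset_cube hkd)]

lemma ite_nsmul_eq_ite_smul {M : Type*} [AddCommMonoid M] [Module F M] (p : Prop) [Decidable p]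
    (n : ℕ) (x : M) : (if p then n else 0) • x = if p then (n : F) • x else 0 := by
  split_ifs <;> simp [Nat.cast_smul_eq_nsmul]

lemma smul_vv_pred_left (hkd : ∀ a, k a ≤ d + 1) :
    (s : F) • vv F d N (s - 1) k =
      ∑ m ∈ cube N d, (if m ∈ box k then s else 0) • Fp F d m (vvIndex N s k m - 1) := by
  rw [vv_eq, Finset.smul_sum, sum_box_eq_sum_cube hkd]
  refine Finset.sum_congr rfl fun m _ => ?_
  rw [ite_nsmul_eq_ite_smul F]
  rcases eq_or_ne s 0 with rfl | hs
  · simp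
  · rw [← vvIndex_pred_left hs]

lemma smul_vv_update_sub_one (hkd : ∀ a, k a ≤ d + 1) (α : Fin (N + 1)) :
    (k α : F) • vv F d N s (update k α (k α - 1)) =
      ∑ m ∈ cube N d, (if m ∈ box (update k α (k α - 1)) then k α else 0) •
        Fp F d m (vvIndex N s k m - 1) := by
  rw [vv_eq, Finset.smul_sum,
    sum_box_eq_sum_cube fun a => (update_sub_one_le k α a).trans (hkd a)]
  refine Finset.sum_congr rfl fun m _ => ?_
  rw [ite_nsmul_eq_ite_smul F]
  rcases eq_or_ne (k α) 0 with hα | hα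
  · simp [hα]
  · rw [vvIndex_update_sub_one hα]

lemma sum_box_smul_Fp_pred (hkd : ∀ a, k a ≤ d + 1) :
    ∑ i ∈ box k, (vvIndex N s k i : F) • Fp F d i (vvIndex N s k i - 1) =
      ∑ m ∈ cube N d, (if m ∈ box k then vvIndex N s k m else 0) •
        Fp F d m (vvIndex N s k m - 1) := by
  rw [sum_box_eq_sum_cube hkd]
  simp only [ite_nsmul_eq_ite_smul F]

lemma sum_box_smul_Fp_update (hkd : ∀ a, k a ≤ d + 1) (β : Fin N) :
    ∑ i ∈ box k, (i β : F) • Fp F d (update i β (i β - 1)) (vvIndex N s k i) =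
      ∑ m ∈ cube N d, (if update m β (m β + 1) ∈ box k then m β + 1 else 0) •
        Fp F d m (vvIndex N s k m - 1) := by
  simp only [ite_nsmul_eq_ite_smul F]
  rw [← Finset.sum_filter, ← Finset.sum_filter_of_ne (p := fun i => i β ≠ 0) fun i _ h hi => by
    simp [hi] at h]
  refine Finset.sum_nbij' (fun i => update i β (i β - 1)) (fun m => update m β (m β + 1))
    ?_ ?_ ?_ ?_ ?_
  · intro i hi
    obtain ⟨hi, hiβ⟩ := Finset.mem_filter.mp hi
    refine Finset.mem_filter.mpr
      ⟨mem_cube_of_le (update_sub_one_le i β) (box_subset_cube hkd hi), ?_⟩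
    rwa [update_sub_one_add_one hiβ]
  · intro m hm
    exact Finset.mem_filter.mpr ⟨(Finset.mem_filter.mp hm).2, by simp⟩
  · intro i hi
    exact update_sub_one_add_one (Finset.mem_filter.mp hi).2
  · intro m _
    simp
  · intro i hi
    have hiβ := (Finset.mem_filter.mp hi).2
    rw [← vvIndex_update_add_one, update_sub_one_add_one hiβ, update_self,
      Nat.sub_add_cancel (Nat.one_le_iff_ne_zero.mpr hiβ)]

end Expansion

theorem vv_commutes_with_e {N d : ℕ} {k : Fin (N + 1) → ℕ} (hk : StrictMono k)
    (hkd : ∀ a, k a ≤ d + 1) (s : ℕ) :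
    (s : F) • vv F d N (s - 1) k + ∑ α, (k α : F) • vv F d N s (update k α (k α - 1)) =
      ∑ i ∈ box k, (∑ β, (i β : F) • Fp F d (update i β (i β - 1)) (vvIndex N s k i) +
        (vvIndex N s k i : F) • Fp F d i (vvIndex N s k i - 1)) := by
  rw [Finset.sum_add_distrib, Finset.sum_comm, smul_vv_pred_left F hkd,
    sum_box_smul_Fp_pred F hkd]
  simp only [smul_vv_update_sub_one F hkd, sum_box_smul_Fp_update F hkd]
  rw [Finset.sum_comm (s := Finset.univ), Finset.sum_comm (s := Finset.univ),
    ← Finset.sum_add_distrib, ← Finset.sum_add_distrib]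
  refine Finset.sum_congr rfl fun m _ => ?_
  rw [← Finset.sum_smul, ← add_smul, ← Finset.sum_smul, ← add_smul]
  by_cases hm : Injective m
  · rw [box_coeff_identity hk hm]
  · rw [Fp, wedge_eq_zero_of_not_injective F hm, zero_tmul, smul_zero, smul_zero]

lemma phi_tmul_wedge_of_monotone {N d : ℕ} (φ : Dom F N d →ₗ[F] Cod F N d)
    (hφ : ∀ s < N, ∀ k : Fin (N + 1) → ℕ, StrictMono k → (∀ a, k a ≤ d + 1) →
      φ (XY F (N - 1) s ⊗ₜ[F] wedge F (d + 1) k) = vv F d N s k)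
    {s : ℕ} (hs : s < N) {k : Fin (N + 1) → ℕ} (hk : Monotone k) (hkd : ∀ a, k a ≤ d + 1) :
    φ (XY F (N - 1) s ⊗ₜ[F] wedge F (d + 1) k) = vv F d N s k := by
  by_cases hsk : StrictMono k
  · exact hφ s hs k hsk hkd
  have hinj : ¬Injective k := fun h => hsk (hk.strictMono_of_injective h)
  have hbox : box k = ∅ :=
    Finset.eq_empty_of_forall_notMem fun _ hm => hsk (strictMono_of_mem_box hm)
  rw [wedge_eq_zero_of_not_injective F hinj, tmul_zero, map_zero, vv_eq, hbox, Finset.sum_empty]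

/-- Lemma 2.9 of the paper. Over `ℂ`, the map `φ` commutes with the action of
the Lie algebra element `e ∈ sl₂(ℂ)` (which acts on `Sym^c E` by `X ∂/∂Y` and on tensor and
exterior products by the derivation rule). -/
theorem statement10 (N d : ℕ) (hN : 0 < N)
    (eS : Sym' ℂ (N - 1) →ₗ[ℂ] Sym' ℂ (N - 1))
    (heS : ∀ s ≤ N - 1, eS (XY ℂ (N - 1) s) = (s : ℂ) • XY ℂ (N - 1) (s - 1))
    (eW : ↥(⋀[ℂ]^(N + 1) (Sym' ℂ (d + 1))) →ₗ[ℂ] ↥(⋀[ℂ]^(N + 1) (Sym' ℂ (d + 1))))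
    (heW : ∀ k : Fin (N + 1) → ℕ, (∀ a, k a ≤ d + 1) →
      eW (wedge ℂ (d + 1) k) =
        ∑ α, (k α : ℂ) • wedge ℂ (d + 1) (Function.update k α (k α - 1)))
    (eV : ↥(⋀[ℂ]^N (Sym' ℂ d)) →ₗ[ℂ] ↥(⋀[ℂ]^N (Sym' ℂ d)))
    (heV : ∀ k : Fin N → ℕ, (∀ a, k a ≤ d) →
      eV (wedge ℂ d k) = ∑ α, (k α : ℂ) • wedge ℂ d (Function.update k α (k α - 1)))
    (eSd : Sym' ℂ d →ₗ[ℂ] Sym' ℂ d)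
    (heSd : ∀ j ≤ d, eSd (XY ℂ d j) = (j : ℂ) • XY ℂ d (j - 1))
    (φ : Dom ℂ N d →ₗ[ℂ] Cod ℂ N d)
    (hφ : ∀ s < N, ∀ k : Fin (N + 1) → ℕ, StrictMono k → (∀ a, k a ≤ d + 1) →
      φ (XY ℂ (N - 1) s ⊗ₜ[ℂ] wedge ℂ (d + 1) k) = vv ℂ d N s k) :
    ∀ x : Dom ℂ N d,
      φ (((TensorProduct.map eS LinearMap.id + TensorProduct.map LinearMap.id eW :
            Dom ℂ N d →ₗ[ℂ] Dom ℂ N d)) x) =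
        ((TensorProduct.map eV LinearMap.id + TensorProduct.map LinearMap.id eSd :
            Cod ℂ N d →ₗ[ℂ] Cod ℂ N d)) (φ x) := by
  suffices h : φ ∘ₗ (TensorProduct.map eS .id + TensorProduct.map .id eW) =
      (TensorProduct.map eV .id + TensorProduct.map .id eSd) ∘ₗ φ from LinearMap.congr_fun h
  refine TensorProduct.ext_of_span_eq_top (span_XY ℂ (N - 1))
    (span_wedge_strictMono ℂ (d + 1) (N + 1)) ?_
  rintro _ ⟨s, rfl⟩ _ ⟨k, hk, hkd, rfl⟩
  have hs : (s : ℕ) < N := by omega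
  simp only [LinearMap.comp_apply, LinearMap.add_apply, map_tmul, LinearMap.id_coe, id_eq]
  calc _ = (s : ℂ) • vv ℂ d N (s - 1) k +
        ∑ α, (k α : ℂ) • vv ℂ d N s (update k α (k α - 1)) := by
        rw [heS s (by omega), heW k hkd, ← smul_tmul', tmul_sum, map_add, map_smul,
          hφ _ (by omega) k hk hkd, map_sum]
        simp only [tmul_smul, map_smul, phi_tmul_wedge_of_monotone ℂ φ hφ hs
          (monotone_update_sub_one hk _) fun a => (update_sub_one_le k _ a).trans (hkd a)]
    _ = _ := vv_commutes_with_e ℂ hk hkd s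
    _ = _ := by
        rw [hφ s hs k hk hkd, vv_eq, map_sum, map_sum, ← Finset.sum_add_distrib]
        refine Finset.sum_congr rfl fun i hi => ?_
        simp only [Fp, map_tmul, LinearMap.id_coe, id_eq]
        rw [heV i (box_entry_le hkd hi), heSd _ (vvIndex_le hs hkd hi), sum_tmul, tmul_smul]
        simp only [← smul_tmul']

end
end
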